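/- arXiv:1910.06534 — 3 statements merged into one kernel-verified Lean document; each statement's English description precedes it below -/
import Mathlib

section
/- Let t₁, t₂, s₁, s₂ ∈ ℂ with |t₂| < |t₁| and |s₂| < |s₁|, and let T(h) = t₁·h + t₂·conj(h) and S(h) = s₁·h + s₂·conj(h) be the corresponding ℝ-linear maps of ℂ. Then T is invertible and the composition S ∘ T⁻¹ is the ℝ-linear map w ↦ c·w + d·conj(w) with c = (s₁·conj(t₁) − s₂·conj(t₂)) / (|t₁|² − |t₂|²) and d = (s₂·t₁ − s₁·t₂) / (|t₁|² − |t₂|²); moreover c ≠ 0 and the Beltrami coefficient of the composition satisfies d/c = ((μ_S − μ_T) / (1 − μ_S·conj(μ_T))) · (t₁/|t₁|)², where μ_S = s₂/s₁ and μ_T = t₂/t₁. -/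
open Complex

/-- Composition formula for Beltrami coefficients, linear-algebraic form. Let
`T h = t₁·h + t₂·conj h` and `S h = s₁·h + s₂·conj h` with `|t₂| < |t₁|` and
`|s₂| < |s₁|`. Then `T` is invertible, `S ∘ T⁻¹` is `w ↦ c·w + d·conj w` with
`c = (s₁·conj t₁ − s₂·conj t₂)/(|t₁|² − |t₂|²)` and
`d = (s₂·t₁ − s₁·t₂)/(|t₁|² − |t₂|²)`, `c ≠ 0`, and
`d/c = ((μ_S − μ_T)/(1 − μ_S·conj μ_T)) · (t₁/|t₁|)²` where `μ_S = s₂/s₁`,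
`μ_T = t₂/t₁`. -/
theorem beltrami_composition_formula (t₁ t₂ s₁ s₂ : ℂ)
    (ht : ‖t₂‖ < ‖t₁‖) (hs : ‖s₂‖ < ‖s₁‖) :
    ∃ e : ℂ ≃ₗ[ℝ] ℂ,
      (∀ h : ℂ, e h = t₁ * h + t₂ * (starRingEnd ℂ) h) ∧
      (∀ w : ℂ, s₁ * e.symm w + s₂ * (starRingEnd ℂ) (e.symm w) =
        ((s₁ * (starRingEnd ℂ) t₁ - s₂ * (starRingEnd ℂ) t₂) /
            ((‖t₁‖ ^ 2 - ‖t₂‖ ^ 2 : ℝ) : ℂ)) * w +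
        ((s₂ * t₁ - s₁ * t₂) /
            ((‖t₁‖ ^ 2 - ‖t₂‖ ^ 2 : ℝ) : ℂ)) * (starRingEnd ℂ) w) ∧
      (s₁ * (starRingEnd ℂ) t₁ - s₂ * (starRingEnd ℂ) t₂) /
          ((‖t₁‖ ^ 2 - ‖t₂‖ ^ 2 : ℝ) : ℂ) ≠ 0 ∧
      ((s₂ * t₁ - s₁ * t₂) / ((‖t₁‖ ^ 2 - ‖t₂‖ ^ 2 : ℝ) : ℂ)) /
          ((s₁ * (starRingEnd ℂ) t₁ - s₂ * (starRingEnd ℂ) t₂) /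
            ((‖t₁‖ ^ 2 - ‖t₂‖ ^ 2 : ℝ) : ℂ)) =
        ((s₂ / s₁ - t₂ / t₁) / (1 - (s₂ / s₁) * (starRingEnd ℂ) (t₂ / t₁))) *
          (t₁ / ((‖t₁‖ : ℝ) : ℂ)) ^ 2 := by
  have ht₁0 : t₁ ≠ 0 := by
    intro h
    rw [h] at ht
    simp at ht
    exact (norm_nonneg t₂).not_gt ht
  have hs₁0 : s₁ ≠ 0 := by
    intro h
    rw [h] at hs
    simp at hs
    exact (norm_nonneg s₂).not_gt hs
  have hDr : (‖t₁‖ ^ 2 - ‖t₂‖ ^ 2 : ℝ) ≠ 0 := by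
    have : ‖t₂‖ ^ 2 < ‖t₁‖ ^ 2 := by
      apply pow_lt_pow_left₀ ht (norm_nonneg _)
      norm_num
    linarith
  have hD : ((‖t₁‖ ^ 2 - ‖t₂‖ ^ 2 : ℝ) : ℂ) ≠ 0 := by
    exact_mod_cast hDr
  have key : ((‖t₁‖ ^ 2 - ‖t₂‖ ^ 2 : ℝ) : ℂ) =
      t₁ * (starRingEnd ℂ) t₁ - t₂ * (starRingEnd ℂ) t₂ := by
    rw [Complex.mul_conj, Complex.mul_conj, Complex.normSq_eq_norm_sq, Complex.normSq_eq_norm_sq]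
    push_cast
    ring
  set D : ℂ := ((‖t₁‖ ^ 2 - ‖t₂‖ ^ 2 : ℝ) : ℂ) with hDdef
  have hDconj : (starRingEnd ℂ) D = D := by rw [hDdef, Complex.conj_ofReal]
  have hc : s₁ * (starRingEnd ℂ) t₁ - s₂ * (starRingEnd ℂ) t₂ ≠ 0 := by
    intro h
    have h' : s₁ * (starRingEnd ℂ) t₁ = s₂ * (starRingEnd ℂ) t₂ := by
      linear_combination h
    have := congrArg (‖·‖) h'
    simp only [norm_mul, Complex.norm_conj] at this
    have hlt : ‖s₂‖ * ‖t₂‖ < ‖s₁‖ * ‖t₁‖ := by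
      apply mul_lt_mul' hs.le ht (norm_nonneg _)
      exact (norm_nonneg _).trans_lt hs
    rw [this] at hlt
    exact lt_irrefl _ hlt
  have ht₁c : (starRingEnd ℂ) t₁ ≠ 0 := by simpa using ht₁0
  refine ⟨{ toFun := fun h => t₁ * h + t₂ * (starRingEnd ℂ) h
            invFun := fun w => ((starRingEnd ℂ) t₁ * w - t₂ * (starRingEnd ℂ) w) / D
            map_add' := by intro x y; simp [map_add]; ring
            map_smul' := by
              intro r x
              simp [Complex.real_smul, map_mul, Complex.conj_ofReal]
              ring
            left_inv := by
              intro h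
              show ((starRingEnd ℂ) t₁ * (t₁ * h + t₂ * (starRingEnd ℂ) h) -
                  t₂ * (starRingEnd ℂ) (t₁ * h + t₂ * (starRingEnd ℂ) h)) / D = h
              rw [div_eq_iff hD, map_add, map_mul, map_mul, Complex.conj_conj, key]
              ring
            right_inv := by
              intro w
              show t₁ * (((starRingEnd ℂ) t₁ * w - t₂ * (starRingEnd ℂ) w) / D) +
                  t₂ * (starRingEnd ℂ) (((starRingEnd ℂ) t₁ * w - t₂ * (starRingEnd ℂ) w) / D) = w
              simp only [map_div₀, hDconj, map_sub, map_mul, Complex.conj_conj]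
              rw [← mul_div_assoc, ← mul_div_assoc, ← add_div, div_eq_iff hD, key]
              ring }, ?_, ?_, ?_, ?_⟩
  · intro h; rfl
  · intro w
    show s₁ * (((starRingEnd ℂ) t₁ * w - t₂ * (starRingEnd ℂ) w) / D) +
        s₂ * (starRingEnd ℂ) (((starRingEnd ℂ) t₁ * w - t₂ * (starRingEnd ℂ) w) / D) = _
    rw [map_div₀, hDconj]
    simp only [map_sub, map_mul, Complex.conj_conj]
    rw [← mul_div_assoc, ← mul_div_assoc, div_mul_eq_mul_div, div_mul_eq_mul_div,
      ← add_div, ← add_div, div_eq_div_iff hD hD]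
    ring
  · exact div_ne_zero hc hD
  · have hne : (1 : ℂ) - s₂ / s₁ * (starRingEnd ℂ) (t₂ / t₁) ≠ 0 := by
      rw [map_div₀, div_mul_div_comm, sub_ne_zero]
      intro h
      apply hc
      rw [eq_comm, div_eq_one_iff_eq (mul_ne_zero hs₁0 ht₁c)] at h
      linear_combination -h
    have habs : ((‖t₁‖ : ℝ) : ℂ) ^ 2 = t₁ * (starRingEnd ℂ) t₁ := by
      rw [Complex.mul_conj, Complex.normSq_eq_norm_sq]
      push_cast
      ring
    rw [div_pow, habs, div_div_div_eq, mul_comm (s₂ * t₁ - s₁ * t₂) D,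
      mul_div_mul_left _ _ hD]
    rw [map_div₀] at hne ⊢
    field_simp
end

section
/- For every norm N on ℂ viewed as a 2-dimensional real vector space, there exists an ℝ-linear equivalence T : ℂ → ℂ such that |h| ≤ N(T(h)) ≤ √2 · |h| for every h ∈ ℂ; that is, after a linear change of coordinates, the unit ball of N is squeezed between a Euclidean disc and its dilate by √2. -/
open Complex

noncomputable section

def quadF (a b c : ℝ) (h : ℂ) : ℝ :=
  a * h.re ^ 2 + 2 * c * h.re * h.im + b * h.im ^ 2

lemma quadF_nonneg {a b c : ℝ} (ha : 0 ≤ a) (hb : 0 ≤ b) (hc : c ^ 2 ≤ a * b)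
    (h : ℂ) : 0 ≤ quadF a b c h := by
  unfold quadF
  rcases eq_or_lt_of_le ha with h0 | h0
  · have hcz : c = 0 := by nlinarith [sq_nonneg c]
    rw [← h0, hcz]
    nlinarith [sq_nonneg h.im]
  · nlinarith [sq_nonneg (a * h.re + c * h.im), sq_nonneg h.im,
      mul_nonneg (sub_nonneg.2 hc) (sq_nonneg h.im)]

lemma continuous_quadF_param (h : ℂ) :
    Continuous (fun p : ℝ × ℝ × ℝ => quadF p.1 p.2.1 p.2.2 h) := by
  unfold quadF; fun_prop

lemma exists_max_det (N : Seminorm ℝ ℂ) {m : ℝ} (hm : 0 < m)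
    (hmN : ∀ h : ℂ, m * ‖h‖ ≤ N h) :
    ∃ p : ℝ × ℝ × ℝ, (0 ≤ p.1 ∧ 0 ≤ p.2.1 ∧ p.2.2 ^ 2 ≤ p.1 * p.2.1 ∧
      ∀ h : ℂ, quadF p.1 p.2.1 p.2.2 h ≤ (N h) ^ 2) ∧
      (∀ q : ℝ × ℝ × ℝ, (0 ≤ q.1 ∧ 0 ≤ q.2.1 ∧ q.2.2 ^ 2 ≤ q.1 * q.2.1 ∧
        ∀ h : ℂ, quadF q.1 q.2.1 q.2.2 h ≤ (N h) ^ 2) →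
        q.1 * q.2.1 - q.2.2 ^ 2 ≤ p.1 * p.2.1 - p.2.2 ^ 2) ∧
      m ^ 4 ≤ p.1 * p.2.1 - p.2.2 ^ 2 := by
  set F : Set (ℝ × ℝ × ℝ) := {q | 0 ≤ q.1 ∧ 0 ≤ q.2.1 ∧ q.2.2 ^ 2 ≤ q.1 * q.2.1 ∧
      ∀ h : ℂ, quadF q.1 q.2.1 q.2.2 h ≤ (N h) ^ 2} with hF
  have hmem : (m ^ 2, m ^ 2, (0:ℝ)) ∈ F := by
    refine ⟨by positivity, by positivity, by simp; positivity, fun h => ?_⟩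
    have h1 : m * ‖h‖ ≤ N h := hmN h
    have h2 : 0 ≤ m * ‖h‖ := by positivity
    have h3 : (m * ‖h‖) ^ 2 ≤ (N h) ^ 2 := by nlinarith
    have h4 : ‖h‖ ^ 2 = h.re ^ 2 + h.im ^ 2 := by
      rw [Complex.sq_norm, Complex.normSq_apply]; ring
    simp only [quadF]
    nlinarith
  have hclosed : IsClosed F := by
    have h1 : IsClosed {q : ℝ × ℝ × ℝ | 0 ≤ q.1} := isClosed_le continuous_const continuous_fst
    have h2 : IsClosed {q : ℝ × ℝ × ℝ | 0 ≤ q.2.1} :=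
      isClosed_le continuous_const (continuous_fst.comp continuous_snd)
    have h3 : IsClosed {q : ℝ × ℝ × ℝ | q.2.2 ^ 2 ≤ q.1 * q.2.1} := by
      apply isClosed_le <;> fun_prop
    have h4 : IsClosed {q : ℝ × ℝ × ℝ | ∀ h : ℂ, quadF q.1 q.2.1 q.2.2 h ≤ (N h) ^ 2} := by
      have : {q : ℝ × ℝ × ℝ | ∀ h : ℂ, quadF q.1 q.2.1 q.2.2 h ≤ (N h) ^ 2} =
          ⋂ h : ℂ, {q : ℝ × ℝ × ℝ | quadF q.1 q.2.1 q.2.2 h ≤ (N h) ^ 2} := by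
        ext q; simp
      rw [this]
      exact isClosed_iInter fun h =>
        isClosed_le (continuous_quadF_param h) continuous_const
    have : F = ({q | 0 ≤ q.1} ∩ {q | 0 ≤ q.2.1}) ∩
        ({q : ℝ × ℝ × ℝ | q.2.2 ^ 2 ≤ q.1 * q.2.1} ∩
         {q : ℝ × ℝ × ℝ | ∀ h : ℂ, quadF q.1 q.2.1 q.2.2 h ≤ (N h) ^ 2}) := by
      ext q; simp [hF, Set.mem_setOf_eq, and_assoc]
    rw [this]
    exact (h1.inter h2).inter (h3.inter h4)
  have hbdd : Bornology.IsBounded F := by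
    set K := max ((N 1) ^ 2) ((N Complex.I) ^ 2) with hK
    have hK0 : 0 ≤ K := le_trans (by positivity) (le_max_left _ _)
    have hsub : F ⊆ Set.Icc ((0:ℝ), (0:ℝ), -K) (K, K, K) := by
      rintro ⟨a, b, c⟩ ⟨ha, hb, hc, hq⟩
      have h1 : a ≤ (N 1) ^ 2 := by
        have := hq 1; simpa [quadF] using this
      have h2 : b ≤ (N Complex.I) ^ 2 := by
        have := hq Complex.I; simpa [quadF] using this
      have haK : a ≤ K := h1.trans (le_max_left _ _)
      have hbK : b ≤ K := h2.trans (le_max_right _ _)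
      have hcK : c ^ 2 ≤ K ^ 2 := by nlinarith
      have hcu : c ≤ K := by nlinarith
      have hcl : -K ≤ c := by nlinarith
      simp only [Set.mem_Icc, Prod.le_def]
      exact ⟨⟨ha, hb, hcl⟩, haK, hbK, hcu⟩
    exact (Metric.isBounded_Icc _ _).subset hsub
  have hcpt : IsCompact F := Metric.isCompact_of_isClosed_isBounded hclosed hbdd
  have hcont : ContinuousOn (fun q : ℝ × ℝ × ℝ => q.1 * q.2.1 - q.2.2 ^ 2) F := by fun_prop
  obtain ⟨p, hpF, hpmax⟩ := hcpt.exists_isMaxOn ⟨_, hmem⟩ hcont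
  refine ⟨p, hpF, fun q hq => hpmax hq, ?_⟩
  have := hpmax hmem
  simpa using le_trans (by simp; ring_nf; rfl) this

lemma exists_support_functional (N : Seminorm ℝ ℂ) {u : ℂ} (hu : u ≠ 0) (hNu : N u = 1) :
    ∃ g : ℂ →ₗ[ℝ] ℝ, g u = 1 ∧ ∀ h : ℂ, g h ≤ N h := by
  have hdom : ∀ x : (LinearPMap.mkSpanSingleton u 1 hu : ℂ →ₗ.[ℝ] ℝ).domain,
      (LinearPMap.mkSpanSingleton u 1 hu : ℂ →ₗ.[ℝ] ℝ) x ≤ N x := by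
    rintro ⟨xv, hxv⟩
    obtain ⟨c, rfl⟩ := Submodule.mem_span_singleton.1 hxv
    rw [LinearPMap.mkSpanSingleton'_apply]
    have h1 : N (c • u) = |c| * N u := by
      rw [map_smul_eq_mul]; rfl
    simp only [smul_eq_mul, mul_one]
    rw [h1, hNu, mul_one]
    exact le_abs_self c
  obtain ⟨g, hg1, hg2⟩ := exists_extension_of_le_sublinear
    (LinearPMap.mkSpanSingleton u 1 hu : ℂ →ₗ.[ℝ] ℝ) N
    (fun c hc x => by
      rw [map_smul_eq_mul]
      simp [Real.norm_eq_abs, abs_of_pos hc])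
    (fun x y => map_add_le_add N x y) hdom
  refine ⟨g, ?_, hg2⟩
  have h2 := hg1 ⟨u, Submodule.mem_span_singleton_self u⟩
  simp only [h2]
  exact LinearPMap.mkSpanSingleton_apply ℝ ℝ hu 1

def linMap (z1 z2 : ℂ) : ℂ →ₗ[ℝ] ℂ where
  toFun h := h.re • z1 + h.im • z2
  map_add' x y := by
    simp only [Complex.add_re, Complex.add_im, add_smul]
    abel
  map_smul' m x := by
    simp only [Complex.real_smul, Complex.mul_re, Complex.mul_im, Complex.ofReal_re,
      Complex.ofReal_im, RingHom.id_apply, smul_add, zero_mul, mul_zero, sub_zero, add_zero]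
    push_cast
    ring

@[simp] lemma linMap_apply (z1 z2 : ℂ) (h : ℂ) :
    linMap z1 z2 h = h.re • z1 + h.im • z2 := rfl

lemma john_aux {det G : ℝ} (hdet : 0 < det) (hG : 2 * det < G) :
    ∃ s l : ℝ, 0 < s ∧ 0 < l ∧ s + l = 1 ∧ det < s * s * det + s * l * G := by
  have hGd : 0 < G - det := by linarith
  have hD : 0 < 2 * (G - det) := by linarith
  have hsq : 0 < (G - 2 * det) ^ 2 := by nlinarith
  refine ⟨G / (2 * (G - det)), (G - 2 * det) / (2 * (G - det)),
    div_pos (by linarith) hD, div_pos (by linarith) hD, ?_, ?_⟩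
  · field_simp
    ring
  · rw [div_mul_div_comm, div_mul_div_comm, div_mul_eq_mul_div, div_mul_eq_mul_div,
      div_add_div _ _ (by positivity) (by positivity), lt_div_iff₀ (by positivity)]
    nlinarith [mul_pos hGd hsq, mul_pos hdet (mul_pos hGd hGd)]

set_option maxHeartbeats 2000000 in
/-- John's theorem in dimension 2: for every norm `N` on `ℂ` (viewed as a
2-dimensional real vector space) there is an `ℝ`-linear equivalence
`T : ℂ ≃ₗ[ℝ] ℂ` such that `|h| ≤ N (T h) ≤ √2 · |h|` for every `h ∈ ℂ`. -/
theorem john_theorem_dim_two (N : Seminorm ℝ ℂ) (hN : ∀ h : ℂ, N h = 0 → h = 0) :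
    ∃ T : ℂ ≃ₗ[ℝ] ℂ, ∀ h : ℂ, ‖h‖ ≤ N (T h) ∧ N (T h) ≤ Real.sqrt 2 * ‖h‖ := by
  have hdecomp : ∀ h : ℂ, h = h.re • (1:ℂ) + h.im • Complex.I := by
    intro h; apply Complex.ext <;> simp
  set C := N 1 + N Complex.I with hCdef
  have hC : ∀ h : ℂ, N h ≤ C * ‖h‖ := by
    intro h
    calc N h = N (h.re • (1:ℂ) + h.im • Complex.I) := by rw [← hdecomp]
    _ ≤ N (h.re • (1:ℂ)) + N (h.im • Complex.I) := map_add_le_add N _ _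
    _ = |h.re| * N 1 + |h.im| * N Complex.I := by
        rw [map_smul_eq_mul, map_smul_eq_mul]; rfl
    _ ≤ ‖h‖ * N 1 + ‖h‖ * N Complex.I := by
        have e1 : |h.re| ≤ ‖h‖ := by
          exact Complex.abs_re_le_norm h
        have e2 : |h.im| ≤ ‖h‖ := by
          exact Complex.abs_im_le_norm h
        exact add_le_add (mul_le_mul_of_nonneg_right e1 (apply_nonneg N 1))
          (mul_le_mul_of_nonneg_right e2 (apply_nonneg N Complex.I))
    _ = C * ‖h‖ := by ring
  have hCnn : 0 ≤ C := by positivity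
  have hcont : Continuous fun h : ℂ => N h := by
    refine (LipschitzWith.of_dist_le_mul (K := Real.toNNReal C) fun h k => ?_).continuous
    rw [Real.dist_eq, dist_eq_norm]
    have h1 : N h - N k ≤ N (h - k) := by
      have := map_add_le_add N (h - k) k
      simp only [sub_add_cancel] at this
      linarith
    have h2 : N k - N h ≤ N (h - k) := by
      have := map_add_le_add N (k - h) h
      simp only [sub_add_cancel] at this
      have h3 : N (k - h) = N (h - k) := map_sub_rev N k h
      linarith
    have h4 : N (h - k) ≤ C * ‖h - k‖ := hC _
    have h5 : (Real.toNNReal C : ℝ) = C := Real.coe_toNNReal C hCnn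
    rw [h5, abs_le]
    have h6 : 0 ≤ ‖h - k‖ := norm_nonneg _
    constructor <;> nlinarith
  obtain ⟨z, hz, hzmin⟩ := (isCompact_sphere (0:ℂ) 1).exists_isMinOn
    ⟨1, by simp⟩ hcont.continuousOn
  have hz1 : ‖z‖ = 1 := by simpa using hz
  set m := N z with hmdef
  have hm : 0 < m := by
    rcases (apply_nonneg N z).lt_or_eq with h | h
    · exact h
    · exfalso
      have := hN z h.symm
      rw [this] at hz1; simp at hz1
  have hmN : ∀ h : ℂ, m * ‖h‖ ≤ N h := by
    intro h
    rcases eq_or_ne h 0 with rfl | hne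
    · simp
    · have hnrm : ‖h‖ ≠ 0 := norm_ne_zero_iff.2 hne
      have hk : ‖h‖⁻¹ • h ∈ Metric.sphere (0:ℂ) 1 := by
        simp only [Metric.mem_sphere, dist_zero_right, norm_smul, norm_inv, norm_norm]
        exact inv_mul_cancel₀ hnrm
      have := hzmin hk
      have hNk : N (‖h‖⁻¹ • h) = ‖h‖⁻¹ * N h := by
        rw [map_smul_eq_mul]
        congr 1
        rw [Real.norm_eq_abs]
        exact _root_.abs_of_nonneg (inv_nonneg.2 (norm_nonneg h))
      simp only [Set.mem_setOf_eq] at this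
      rw [hNk] at this
      have hpos : 0 < ‖h‖ := lt_of_le_of_ne (norm_nonneg h) (Ne.symm hnrm)
      have h7 := mul_le_mul_of_nonneg_right this (norm_nonneg h)
      have h8 : ‖h‖⁻¹ * N h * ‖h‖ = N h := by
        rw [mul_comm (‖h‖⁻¹) (N h), mul_assoc, inv_mul_cancel₀ hnrm, mul_one]
      rw [hmdef]
      rw [h8] at h7
      exact h7
  obtain ⟨⟨a, b, c⟩, ⟨ha, hb, hc, hq⟩, hmax, hdet⟩ := exists_max_det N hm hmN
  dsimp only at ha hb hc hq hmax hdet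
  have hdetpos : 0 < a * b - c ^ 2 := lt_of_lt_of_le (by positivity) hdet
  -- Key claim : N² ≤ 2 q*
  have key : ∀ h : ℂ, (N h) ^ 2 ≤ 2 * quadF a b c h := by
    by_contra hcon
    push_neg at hcon
    obtain ⟨v, hv⟩ := hcon
    have hQv : 0 ≤ quadF a b c v := quadF_nonneg ha hb hc v
    have hNv : 0 < N v := by
      rcases (apply_nonneg N v).lt_or_eq with h | h
      · exact h
      · exfalso
        rw [hN v h.symm] at hv
        simp [quadF] at hv
    set u : ℂ := (N v)⁻¹ • v with hu
    have hNu : N u = 1 := by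
      rw [hu, map_smul_eq_mul]
      rw [Real.norm_eq_abs, _root_.abs_of_nonneg (inv_nonneg.2 hNv.le)]
      exact inv_mul_cancel₀ hNv.ne'
    have hu0 : u ≠ 0 := by
      intro h
      rw [h] at hNu
      simp at hNu
    have hQu : quadF a b c u < 1 / 2 := by
      have e1 : quadF a b c u = ((N v)⁻¹) ^ 2 * quadF a b c v := by
        rw [hu]
        unfold quadF
        simp only [Complex.smul_re, Complex.smul_im, smul_eq_mul]
        ring
      have h3 : ((N v)⁻¹) ^ 2 * (N v) ^ 2 = 1 := by
        field_simp
      nlinarith [mul_lt_mul_of_pos_left hv (by positivity : (0:ℝ) < ((N v)⁻¹) ^ 2)]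
    obtain ⟨g, hgu, hg2⟩ := exists_support_functional N hu0 hNu
    have hgabs : ∀ h : ℂ, |g h| ≤ N h := by
      intro h
      rw [abs_le]
      refine ⟨?_, hg2 h⟩
      have h1 := hg2 (-h)
      rw [map_neg] at h1
      have h4 : N (-h) = N h := map_neg_eq_map N h
      linarith
    set p := g 1 with hp
    set r := g Complex.I with hr
    have hgh : ∀ h : ℂ, g h = p * h.re + r * h.im := by
      intro h
      conv_lhs => rw [hdecomp h]
      rw [map_add, map_smul, map_smul, smul_eq_mul, smul_eq_mul]
      ring
    have hQunn : 0 ≤ quadF a b c u := quadF_nonneg ha hb hc u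
    have hCS : (a * b - c ^ 2) * (g u) ^ 2 ≤
        (b * p ^ 2 - 2 * c * p * r + a * r ^ 2) * quadF a b c u := by
      rw [hgh u]
      unfold quadF
      nlinarith [sq_nonneg ((c * p - a * r) * u.re + (b * p - c * r) * u.im)]
    rw [hgu, one_pow, mul_one] at hCS
    have hGnn : 0 < b * p ^ 2 - 2 * c * p * r + a * r ^ 2 := by
      nlinarith
    have hGdet : 2 * (a * b - c ^ 2) < b * p ^ 2 - 2 * c * p * r + a * r ^ 2 := by
      nlinarith [mul_pos hGnn (by linarith : (0:ℝ) < 1 / 2 - quadF a b c u)]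
    obtain ⟨s, l, hspos, hlpos, hsl, hgt⟩ := john_aux hdetpos hGdet
    have hmem' : (0 ≤ s * a + l * p ^ 2 ∧ 0 ≤ s * b + l * r ^ 2 ∧
        (s * c + l * p * r) ^ 2 ≤ (s * a + l * p ^ 2) * (s * b + l * r ^ 2) ∧
        ∀ h : ℂ, quadF (s * a + l * p ^ 2) (s * b + l * r ^ 2) (s * c + l * p * r) h
          ≤ (N h) ^ 2) := by
      refine ⟨add_nonneg (mul_nonneg hspos.le ha) (mul_nonneg hlpos.le (sq_nonneg p)),
        add_nonneg (mul_nonneg hspos.le hb) (mul_nonneg hlpos.le (sq_nonneg r)), ?_, ?_⟩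
      · have id3 : (s * a + l * p ^ 2) * (s * b + l * r ^ 2) - (s * c + l * p * r) ^ 2 =
            s ^ 2 * (a * b - c ^ 2) +
            s * l * (b * p ^ 2 - 2 * c * p * r + a * r ^ 2) := by ring
        linarith [id3, mul_nonneg (sq_nonneg s) hdetpos.le,
          mul_nonneg (mul_pos hspos hlpos).le hGnn.le]
      · intro h
        have e : quadF (s * a + l * p ^ 2) (s * b + l * r ^ 2) (s * c + l * p * r) h =
            s * quadF a b c h + l * (p * h.re + r * h.im) ^ 2 := by
          unfold quadF; ring
        have e2 : (p * h.re + r * h.im) = g h := (hgh h).symm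
        have e3 : (g h) ^ 2 ≤ (N h) ^ 2 := by
          have h5 := hgabs h
          nlinarith [abs_nonneg (g h), _root_.sq_abs (g h), apply_nonneg N h]
        have e4 := hq h
        rw [e, e2]
        have e5 : s * (N h) ^ 2 + l * (N h) ^ 2 = (N h) ^ 2 := by
          rw [← add_mul, hsl, one_mul]
        linarith [mul_le_mul_of_nonneg_left e4 hspos.le,
          mul_le_mul_of_nonneg_left e3 hlpos.le]
    have hle := hmax (s * a + l * p ^ 2, s * b + l * r ^ 2, s * c + l * p * r) hmem'
    dsimp only at hle
    linarith [hgt, hle]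
  -- Construction of T
  have hapos : 0 < a := by nlinarith [sq_nonneg c]
  have had : 0 < a * (a * b - c ^ 2) := mul_pos hapos hdetpos
  set A := (Real.sqrt a)⁻¹ with hA
  set K := (Real.sqrt (a * (a * b - c ^ 2)))⁻¹ with hK
  have hA2 : a * A ^ 2 = 1 := by
    rw [hA, inv_pow, Real.sq_sqrt hapos.le]
    exact mul_inv_cancel₀ hapos.ne'
  have hK2 : (a * (a * b - c ^ 2)) * K ^ 2 = 1 := by
    rw [hK, inv_pow, Real.sq_sqrt had.le]
    exact mul_inv_cancel₀ had.ne'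
  set z1 : ℂ := (A : ℂ) with hz1
  set z2 : ℂ := Complex.mk (-(c * K)) (a * K) with hz2
  set T0 : ℂ →ₗ[ℝ] ℂ := linMap z1 z2 with hT0
  have hre : ∀ h : ℂ, (T0 h).re = h.re * A - h.im * (c * K) := by
    intro h
    simp [hT0, hz1, hz2, Complex.add_re, Complex.smul_re]
    ring
  have him : ∀ h : ℂ, (T0 h).im = h.im * (a * K) := by
    intro h
    simp [hT0, hz1, hz2, Complex.add_im, Complex.smul_im]
  have hTq : ∀ h : ℂ, quadF a b c (T0 h) = h.re ^ 2 + h.im ^ 2 := by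
    intro h
    unfold quadF
    rw [hre h, him h]
    calc a * (h.re * A - h.im * (c * K)) ^ 2 +
          2 * c * (h.re * A - h.im * (c * K)) * (h.im * (a * K)) +
          b * (h.im * (a * K)) ^ 2
        = (a * A ^ 2) * h.re ^ 2 + ((a * (a * b - c ^ 2)) * K ^ 2) * h.im ^ 2 := by ring
      _ = h.re ^ 2 + h.im ^ 2 := by rw [hA2, hK2]; ring
  have hnormsq : ∀ h : ℂ, ‖h‖ ^ 2 = h.re ^ 2 + h.im ^ 2 := by
    intro h
    rw [Complex.sq_norm, Complex.normSq_apply]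
    ring
  have hinj : Function.Injective T0 := by
    intro x y hxy
    have h0 : T0 (x - y) = 0 := by rw [map_sub, hxy, sub_self]
    have h1 := hTq (x - y)
    rw [h0] at h1
    simp only [quadF, Complex.zero_re, Complex.zero_im] at h1
    have h2 : (x - y).re = 0 ∧ (x - y).im = 0 := by
      constructor <;> nlinarith [sq_nonneg (x - y).re, sq_nonneg (x - y).im]
    have h3 : x - y = 0 := Complex.ext h2.1 h2.2
    exact sub_eq_zero.mp h3
  have hsurj : Function.Surjective T0 :=
    (LinearMap.injective_iff_surjective_of_finrank_eq_finrank rfl).mp hinj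
  refine ⟨LinearEquiv.ofBijective T0 ⟨hinj, hsurj⟩, fun h => ?_⟩
  have hTh : (LinearEquiv.ofBijective T0 ⟨hinj, hsurj⟩) h = T0 h := rfl
  rw [hTh]
  have k0 : quadF a b c (T0 h) = ‖h‖ ^ 2 := by rw [hTq h, hnormsq h]
  have k1 := hq (T0 h)
  have k2 := key (T0 h)
  rw [k0] at k1 k2
  constructor
  · nlinarith [norm_nonneg h, apply_nonneg N (T0 h)]
  · have s2 : Real.sqrt 2 ^ 2 = 2 := Real.sq_sqrt (by norm_num)
    nlinarith [Real.sqrt_nonneg 2, norm_nonneg h, apply_nonneg N (T0 h),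
      mul_nonneg (Real.sqrt_nonneg 2) (norm_nonneg h)]

end
end

section
/- Let N be a norm on ℂ (viewed as a 2-dimensional real vector space) and let r > 0. Suppose that N(h) ≤ |h|/r for every h ∈ ℂ (i.e. the closed Euclidean disc of radius r is contained in the unit ball {N ≤ 1}), and that for every ℝ-linear map T : ℂ → ℂ which maps the closed Euclidean unit disc into {h : N(h) ≤ 1} one has |det(T)| ≤ r² (i.e. the disc of radius r has maximal area among ellipses contained in the unit ball of N). Then sup{N(h) : |h| = 1} = 1/r. -/
/-- Let `N` be a norm on `ℂ` and `r > 0`. Suppose `N h ≤ |h|/r` for all `h`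
(the closed Euclidean disc of radius `r` lies in the unit ball of `N`), and
that every `ℝ`-linear `T : ℂ → ℂ` mapping the closed Euclidean unit disc into
`{N ≤ 1}` has `|det T| ≤ r²` (the disc of radius `r` has maximal area among
ellipses inside the unit ball of `N`). Then `sup {N h : |h| = 1} = 1/r`. -/
theorem energy_eq_jacobian_of_isotropic (N : Seminorm ℝ ℂ)
    (hN : ∀ h : ℂ, N h = 0 → h = 0) (r : ℝ) (hr : 0 < r)
    (hball : ∀ h : ℂ, N h ≤ ‖h‖ / r)
    (hmax : ∀ T : ℂ →ₗ[ℝ] ℂ, (∀ h : ℂ, ‖h‖ ≤ 1 → N (T h) ≤ 1) →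
      |LinearMap.det T| ≤ r ^ 2) :
    sSup {x : ℝ | ∃ h : ℂ, ‖h‖ = 1 ∧ x = N h} = 1 / r := by
  set S : Set ℝ := {x : ℝ | ∃ h : ℂ, ‖h‖ = 1 ∧ x = N h} with hS
  have hne : S.Nonempty := ⟨N 1, 1, by simp, rfl⟩
  have hbdd : ∀ x ∈ S, x ≤ 1 / r := by
    rintro x ⟨h, hh, rfl⟩
    simpa [hh] using hball h
  have hBdd : BddAbove S := ⟨1 / r, hbdd⟩
  set M : ℝ := sSup S with hM
  have hMle : M ≤ 1 / r := csSup_le hne hbdd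
  have hN1 : 0 < N 1 :=
    (apply_nonneg N 1).lt_of_ne' (fun h => one_ne_zero (hN 1 h))
  have hMpos : 0 < M := lt_of_lt_of_le hN1 (le_csSup hBdd ⟨1, by simp, rfl⟩)
  -- N h ≤ M * ‖h‖ for all h
  have key : ∀ h : ℂ, N h ≤ M * ‖h‖ := by
    intro h
    rcases eq_or_ne h 0 with rfl | hh0
    · simp
    · have hn : (0:ℝ) < ‖h‖ := norm_pos_iff.mpr hh0
      have hu : ‖(‖h‖⁻¹ • h : ℂ)‖ = 1 := by
        rw [norm_smul, Real.norm_eq_abs, abs_of_pos (inv_pos.mpr hn),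
          inv_mul_cancel₀ hn.ne']
      have hmem : N (‖h‖⁻¹ • h) ≤ M := le_csSup hBdd ⟨_, hu, rfl⟩
      have : N h = ‖h‖ * N (‖h‖⁻¹ • h) := by
        rw [map_smul_eq_mul, Real.norm_eq_abs, abs_of_pos (inv_pos.mpr hn),
          ← mul_assoc, mul_inv_cancel₀ hn.ne', one_mul]
      rw [this, mul_comm M ‖h‖]
      exact mul_le_mul_of_nonneg_left hmem hn.le
  -- apply hmax to T = M⁻¹ • id
  have hT : ∀ h : ℂ, ‖h‖ ≤ 1 → N ((M⁻¹ • (LinearMap.id : ℂ →ₗ[ℝ] ℂ)) h) ≤ 1 := by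
    intro h hh
    have : N (M⁻¹ • h) = M⁻¹ * N h := by
      rw [map_smul_eq_mul, Real.norm_eq_abs, abs_of_pos (inv_pos.mpr hMpos)]
    simp only [LinearMap.smul_apply, LinearMap.id_coe, id_eq, this]
    calc M⁻¹ * N h ≤ M⁻¹ * (M * ‖h‖) :=
          mul_le_mul_of_nonneg_left (key h) (inv_pos.mpr hMpos).le
      _ = ‖h‖ := by field_simp
      _ ≤ 1 := hh
  have hdet := hmax _ hT
  have hdet2 : |LinearMap.det (M⁻¹ • (LinearMap.id : ℂ →ₗ[ℝ] ℂ))| = M⁻¹ ^ 2 := by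
    rw [LinearMap.det_smul, LinearMap.det_id, mul_one, Complex.finrank_real_complex,
      abs_pow, abs_of_pos (inv_pos.mpr hMpos)]
  rw [hdet2] at hdet
  have hinv : M⁻¹ ≤ r := by
    nlinarith [inv_pos.mpr hMpos]
  have : 1 / r ≤ M := by
    rw [div_le_iff₀ hr, ← inv_mul_le_iff₀ hMpos] at *
    nlinarith [inv_pos.mpr hMpos]
  linarith
end
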